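/- Let q ≥ 2 and n = q^4 - 1, and fix 0 ≤ a_2 ≤ q-2, 0 ≤ a_3 ≤ q-1 with a_2 + a_3 ≥ q - 1. Then every x in the interlude [(a_2,a_3,a_2,a_3), (a_2+1,a_3,a_2+1,a_3)]_M generates an SR-asymmetric q^2-cyclotomic coset, and the number of such x equals q^2 - q·a_3 - a_2 - 1. The same count and conclusion hold for the interlude [(q-1,a_3,q-1,a_3), (0,a_3+1,0,a_3+1)]_M with a_2 = q-1 and 0 ≤ a_3 ≤ q-2. -/
import Mathlib


private lemma modkey (q u v : ℕ) (h : v + u * q ^ 2 < q ^ 4 - 1) :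
    ((u + v * q ^ 2) * q ^ 2) % (q ^ 4 - 1) = v + u * q ^ 2 := by
  have h2 : (u + v * q ^ 2) * q ^ 2 = u * q ^ 2 + v * q ^ 4 := by ring
  have h1 : v * (q ^ 4 - 1) + v = v * q ^ 4 := by
    rw [← Nat.mul_succ]; congr 1; omega
  have e : (u + v * q ^ 2) * q ^ 2 = (v + u * q ^ 2) + v * (q ^ 4 - 1) := by omega
  rw [e, Nat.add_mul_mod_self_right, Nat.mod_eq_of_lt h]

private lemma bigineq (q a2 a3 x0 x1 : ℕ) (hq : 2 ≤ q)
    (h3 : a3 + 1 ≤ q) (hlo : q ≤ a2 + a3 + 1)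
    (hx0 : x0 + 1 ≤ q) (hx1 : x1 + 1 ≤ q)
    (hut : a2 + a3 * q + 1 ≤ x0 + x1 * q) :
    q ^ 4 ≤ (a3 + x0 * q + x1 * q ^ 2 + a2 * q ^ 3)
      + (x0 + x1 * q + a2 * q ^ 2 + a3 * q ^ 3) := by
  have e0 : q ^ 2 = q * q := by ring
  have e3 : q ^ 3 = q * q ^ 2 := by ring
  have e4 : q ^ 4 = q * q ^ 3 := by ring
  have hx1a3 : a3 ≤ x1 := by
    by_contra h
    push_neg at h
    have h5 := Nat.mul_le_mul_right q (show x1 + 1 ≤ a3 by omega)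
    have e : (x1 + 1) * q = x1 * q + q := by ring
    omega
  rcases eq_or_lt_of_le hx1a3 with heq | hlt
  · subst heq
    have hx0a2 : a2 + 1 ≤ x0 := by omega
    have p1 := Nat.mul_le_mul_right q hlo
    have f1 : (a2 + a3 + 1) * q = a2 * q + a3 * q + q := by ring
    have p0 := Nat.mul_le_mul_right q hx0a2
    have f0 : (a2 + 1) * q = a2 * q + q := by ring
    have p2 := Nat.mul_le_mul_right (q ^ 2) hlo
    have f2 : (a2 + a3 + 1) * q ^ 2 = a2 * q ^ 2 + a3 * q ^ 2 + q ^ 2 := by ring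
    have p3 := Nat.mul_le_mul_right (q ^ 3) hlo
    have f3 : (a2 + a3 + 1) * q ^ 3 = a2 * q ^ 3 + a3 * q ^ 3 + q ^ 3 := by ring
    omega
  · have hq' : q ≤ a2 + x1 := by omega
    have p2 := Nat.mul_le_mul_right (q ^ 2) hq'
    have f2 : (a2 + x1) * q ^ 2 = a2 * q ^ 2 + x1 * q ^ 2 := by ring
    have p3 := Nat.mul_le_mul_right (q ^ 3) hlo
    have f3 : (a2 + a3 + 1) * q ^ 3 = a2 * q ^ 3 + a3 * q ^ 3 + q ^ 3 := by ring
    omega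

private lemma core (q a2 a3 n lb ub : ℕ) (hq : 2 ≤ q) (hn : n = q ^ 4 - 1)
    (h2 : a2 + 1 ≤ q) (h3 : a3 + 1 ≤ q) (hlo : q ≤ a2 + a3 + 1) (hhi : a2 + a3 + 3 ≤ 2 * q)
    (hlb : lb = a2 + a3 * q + a2 * q ^ 2 + a3 * q ^ 3) (hub : ub = lb + (1 + q ^ 2)) :
    (∀ x ∈ Finset.Ioo lb ub, x ≤ (x * q ^ 2) % n →
      min ((((n : ℤ) - q * x) % n).toNat) ((((n : ℤ) - q ^ 3 * x) % n).toNat) < x) ∧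
    ((Finset.Ioo lb ub).filter (fun x => x ≤ (x * q ^ 2) % n)).card
      = q ^ 2 - q * a3 - a2 - 1 := by
  subst hn hub hlb
  have hq4 : q ^ 4 = q ^ 2 * q ^ 2 := by ring
  have hq2 : 4 ≤ q ^ 2 := by nlinarith
  have hq40 : 0 < q ^ 4 := by positivity
  have hPA : a2 + a3 * q + a2 * q ^ 2 + a3 * q ^ 3
      = (a2 + a3 * q) + (a2 + a3 * q) * q ^ 2 := by ring
  have hA2 : a2 + a3 * q + 2 ≤ q ^ 2 := by nlinarith
  obtain ⟨K, hK⟩ := Nat.exists_eq_add_of_le hA2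
  set lb := a2 + a3 * q + a2 * q ^ 2 + a3 * q ^ 3 with hlbdef
  have hiff : ∀ x, lb < x → x < lb + (1 + q ^ 2) →
      (x ≤ (x * q ^ 2) % (q ^ 4 - 1) ↔ x ≤ lb + (K + 1)) := by
    intro x hx1 hx2
    constructor
    · intro hmin
      by_contra hgt
      push_neg at hgt
      set s := x - lb - (K + 2) with hs
      have hxs : x = s + ((a2 + a3 * q) + 1) * q ^ 2 := by
        have e : ((a2 + a3 * q) + 1) * q ^ 2 = (a2 + a3 * q) * q ^ 2 + q ^ 2 := by ring
        omega
      have hsb : s ≤ a2 + a3 * q := by omega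
      have hbound : ((a2 + a3 * q) + 1) + s * q ^ 2 < q ^ 4 - 1 := by
        have h5 : s * q ^ 2 + 2 * q ^ 2 ≤ q ^ 2 * q ^ 2 := by
          have := Nat.mul_le_mul_right (q ^ 2) (show s + 2 ≤ q ^ 2 by omega)
          calc s * q ^ 2 + 2 * q ^ 2 = (s + 2) * q ^ 2 := by ring
            _ ≤ q ^ 2 * q ^ 2 := this
        omega
      have hm := modkey q s ((a2 + a3 * q) + 1) hbound
      rw [hxs, hm] at hmin
      have h6 : (s + 1) * q ^ 2 ≤ (a2 + a3 * q + 1) * q ^ 2 :=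
        Nat.mul_le_mul_right _ (by omega)
      have h7 : (s + 1) * q ^ 2 = s * q ^ 2 + q ^ 2 := by ring
      omega
    · intro hle
      set u := x - (a2 + a3 * q) * q ^ 2 with hu
      have hxu : x = u + (a2 + a3 * q) * q ^ 2 := by omega
      have hub' : u + 1 ≤ q ^ 2 := by omega
      have huA : a2 + a3 * q + 1 ≤ u := by omega
      have hbound : (a2 + a3 * q) + u * q ^ 2 < q ^ 4 - 1 := by
        have h5 : u * q ^ 2 + q ^ 2 ≤ q ^ 2 * q ^ 2 := by
          have := Nat.mul_le_mul_right (q ^ 2) hub'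
          calc u * q ^ 2 + q ^ 2 = (u + 1) * q ^ 2 := by ring
            _ ≤ q ^ 2 * q ^ 2 := this
        omega
      have hm := modkey q u (a2 + a3 * q) hbound
      rw [hxu, hm]
      obtain ⟨d, hd⟩ := Nat.exists_eq_add_of_le huA
      have h8 : u * q ^ 2 = (a2 + a3 * q) * q ^ 2 + (1 + d) * q ^ 2 := by
        rw [hd]; ring
      have h9 : 1 + d ≤ (1 + d) * q ^ 2 := Nat.le_mul_of_pos_right _ (by positivity)
      omega
  constructor
  · -- asymmetry
    intro x hx hmin
    rw [Finset.mem_Ioo] at hx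
    have hxK := (hiff x hx.1 hx.2).mp hmin
    have hx1 := hx.1
    -- digit decomposition
    set u := x - (a2 + a3 * q) * q ^ 2 with hu
    have hxu : x = u + (a2 + a3 * q) * q ^ 2 := by omega
    have hub' : u + 1 ≤ q ^ 2 := by omega
    have huA : a2 + a3 * q + 1 ≤ u := by omega
    set x0 := u % q with hx0def
    set x1 := u / q with hx1def
    have hdm : q * x1 + x0 = u := Nat.div_add_mod u q
    have hx0q : x0 + 1 ≤ q := Nat.mod_lt _ (by omega)
    have hx1q : x1 + 1 ≤ q := by
      have : u < q * q := by
        have : q * q = q ^ 2 := by ring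
        omega
      have := Nat.div_lt_iff_lt_mul (show 0 < q by omega) |>.mpr this
      omega
    have hxdig : x = x0 + x1 * q + a2 * q ^ 2 + a3 * q ^ 3 := by
      have e1 : (a2 + a3 * q) * q ^ 2 = a2 * q ^ 2 + a3 * q ^ 3 := by ring
      have e2 : q * x1 = x1 * q := by ring
      omega
    have hut : a2 + a3 * q + 1 ≤ x0 + x1 * q := by
      have e2 : q * x1 = x1 * q := by ring
      omega
    set D := a3 + x0 * q + x1 * q ^ 2 + a2 * q ^ 3 with hD
    have hqD : q * x = a3 * (q ^ 4 - 1) + D := by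
      have e2 : q * x = x0 * q + x1 * q ^ 2 + a2 * q ^ 3 + a3 * q ^ 4 := by
        rw [hxdig]; ring
      have e3 : a3 * (q ^ 4 - 1) + a3 = a3 * q ^ 4 := by
        rw [← Nat.mul_succ]; congr 1; omega
      omega
    have hbig := bigineq q a2 a3 x0 x1 hq h3 hlo hx0q hx1q hut
    have hDpos : 0 < D := by
      have h9 : a2 ≤ a2 * q ^ 3 := Nat.le_mul_of_pos_right _ (by positivity)
      omega
    have hDlt : D < q ^ 4 - 1 := by
      have hq3 : q + 1 ≤ q ^ 3 := by nlinarith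
      have p0 := Nat.mul_le_mul_right q hx0q
      have f0 : (x0 + 1) * q = x0 * q + q := by ring
      have e0 : q * q = q ^ 2 := by ring
      have p1 := Nat.mul_le_mul_right (q ^ 2) hx1q
      have f1 : (x1 + 1) * q ^ 2 = x1 * q ^ 2 + q ^ 2 := by ring
      have e1 : q * q ^ 2 = q ^ 3 := by ring
      have e4 : q * q ^ 3 = q ^ 4 := by ring
      rcases Nat.lt_or_ge a2 (q - 1) with hc | hc
      · have p2 := Nat.mul_le_mul_right (q ^ 3) (show a2 + 2 ≤ q by omega)
        have f2 : (a2 + 2) * q ^ 3 = a2 * q ^ 3 + 2 * q ^ 3 := by ring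
        omega
      · have ha3 : a3 + 2 ≤ q := by omega
        have p2 := Nat.mul_le_mul_right (q ^ 3) (show a2 + 1 ≤ q by omega)
        have f2 : (a2 + 1) * q ^ 3 = a2 * q ^ 3 + q ^ 3 := by ring
        omega
    have hmod : (((q ^ 4 - 1 : ℕ) : ℤ) - (q : ℤ) * (x : ℤ)) % ((q ^ 4 - 1 : ℕ) : ℤ)
        = ((q ^ 4 - 1 - D : ℕ) : ℤ) := by
      have hc2 : ((q ^ 4 - 1 - D : ℕ) : ℤ) = ((q ^ 4 - 1 : ℕ) : ℤ) - (D : ℤ) := by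
        exact_mod_cast Nat.cast_sub hDlt.le
      have hc1 : (q : ℤ) * (x : ℤ) = (a3 : ℤ) * ((q ^ 4 - 1 : ℕ) : ℤ) + (D : ℤ) := by
        exact_mod_cast hqD
      have e : ((q ^ 4 - 1 : ℕ) : ℤ) - (q : ℤ) * (x : ℤ)
          = ((q ^ 4 - 1 - D : ℕ) : ℤ) + ((q ^ 4 - 1 : ℕ) : ℤ) * (-(a3 : ℤ)) := by
        rw [hc2, hc1]; ring
      rw [e, Int.add_mul_emod_self_left]
      refine Int.emod_eq_of_lt (by positivity) ?_
      exact_mod_cast Nat.sub_lt (by omega) hDpos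
    refine lt_of_le_of_lt (min_le_left _ _) ?_
    rw [hmod, Int.toNat_natCast]
    omega
  · -- count
    have hfilter : (Finset.Ioo lb (lb + (1 + q ^ 2))).filter
        (fun x => x ≤ (x * q ^ 2) % (q ^ 4 - 1)) = Finset.Ioc lb (lb + (K + 1)) := by
      ext y
      simp only [Finset.mem_filter, Finset.mem_Ioo, Finset.mem_Ioc]
      constructor
      · rintro ⟨⟨hy1, hy2⟩, hy3⟩
        exact ⟨hy1, (hiff y hy1 hy2).mp hy3⟩
      · rintro ⟨hy1, hy2⟩
        have hy2' : y < lb + (1 + q ^ 2) := by omega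
        exact ⟨⟨hy1, hy2'⟩, (hiff y hy1 hy2').mpr hy2⟩
    rw [hfilter, Nat.card_Ioc]
    have : q * a3 = a3 * q := by ring
    omega

/-- In an interlude `[(a2,a3,a2,a3),(a2+1,a3,a2+1,a3)]_M` with `a2 + a3 ≥ q-1`,
every minimal representative generates an SR-asymmetric `q^2`-cyclotomic coset
modulo `n = q^4 - 1`, and there are `q^2 - q·a3 - a2 - 1` of them; the same
holds for the interlude `[(q-1,a3,q-1,a3),(0,a3+1,0,a3+1)]_M` (with `a2 = q-1`). -/
theorem stmt14 (q n : ℕ) (hq : 2 ≤ q) (hn : n = q ^ 4 - 1) :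
    (∀ a2 a3 : ℕ, a2 ≤ q - 2 → a3 ≤ q - 1 → q - 1 ≤ a2 + a3 →
      (∀ x ∈ Finset.Ioo (a2 + a3 * q + a2 * q ^ 2 + a3 * q ^ 3)
          ((a2 + 1) + a3 * q + (a2 + 1) * q ^ 2 + a3 * q ^ 3),
        x ≤ (x * q ^ 2) % n →
          min ((((n : ℤ) - q * x) % n).toNat) ((((n : ℤ) - q ^ 3 * x) % n).toNat) < x) ∧
      ((Finset.Ioo (a2 + a3 * q + a2 * q ^ 2 + a3 * q ^ 3)
          ((a2 + 1) + a3 * q + (a2 + 1) * q ^ 2 + a3 * q ^ 3)).filter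
        (fun x => x ≤ (x * q ^ 2) % n)).card = q ^ 2 - q * a3 - a2 - 1) ∧
    (∀ a3 : ℕ, a3 ≤ q - 2 →
      (∀ x ∈ Finset.Ioo ((q - 1) + a3 * q + (q - 1) * q ^ 2 + a3 * q ^ 3)
          ((a3 + 1) * q + (a3 + 1) * q ^ 3),
        x ≤ (x * q ^ 2) % n →
          min ((((n : ℤ) - q * x) % n).toNat) ((((n : ℤ) - q ^ 3 * x) % n).toNat) < x) ∧
      ((Finset.Ioo ((q - 1) + a3 * q + (q - 1) * q ^ 2 + a3 * q ^ 3)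
          ((a3 + 1) * q + (a3 + 1) * q ^ 3)).filter
        (fun x => x ≤ (x * q ^ 2) % n)).card = q ^ 2 - q * a3 - (q - 1) - 1) := by
  constructor
  · intro a2 a3 h2 h3 hlo
    exact core q a2 a3 n _ _ hq hn (by omega) (by omega) (by omega) (by omega) rfl (by ring)
  · intro a3 h3
    have hub : (a3 + 1) * q + (a3 + 1) * q ^ 3
        = ((q - 1) + a3 * q + (q - 1) * q ^ 2 + a3 * q ^ 3) + (1 + q ^ 2) := by
      obtain ⟨b, rfl⟩ : ∃ b, q = b + 1 := ⟨q - 1, by omega⟩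
      simp only [Nat.add_sub_cancel]
      ring
    exact core q (q - 1) a3 n _ _ hq hn (by omega) (by omega) (by omega) (by omega) rfl hub
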